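/- arXiv:2211.09601 — 4 statements merged into one kernel-verified Lean document; each statement's English description precedes it below -/
import Mathlib

section
/- For positive reals a, b, c, setting a' = bc/(a+c), b' = a+c, c' = ab/(a+c), one has the matrix identity E12(a)·E23(b)·E12(c) = E23(a')·E12(b')·E23(c') of 3×3 matrices. -/
/-- The elementary unipotent matrix with `t` in position (1,2). -/
def E12 (t : ℝ) : Matrix (Fin 3) (Fin 3) ℝ := !![1, t, 0; 0, 1, 0; 0, 0, 1]

/-- The elementary unipotent matrix with `t` in position (2,3). -/
def E23 (t : ℝ) : Matrix (Fin 3) (Fin 3) ℝ := !![1, 0, 0; 0, 1, t; 0, 0, 1]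

theorem stmt_1 (a b c : ℝ) (ha : 0 < a) (hb : 0 < b) (hc : 0 < c) :
    E12 a * E23 b * E12 c =
      E23 (b * c / (a + c)) * E12 (a + c) * E23 (a * b / (a + c)) := by
  have hac : a + c ≠ 0 := by positivity
  unfold E12 E23
  ext i j
  fin_cases i <;> fin_cases j <;>
    · simp [Matrix.mul_apply, Fin.sum_univ_succ]
      try field_simp
      try ring
end

section
/- The map (a,b,c) ↦ (bc/(a+c), a+c, ab/(a+c)) on triples of positive reals is injective. -/
/-- The Lusztig transformation `T(a,b,c) = (bc/(a+c), a+c, ab/(a+c))`. -/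
noncomputable def lusztigT (p : ℝ × ℝ × ℝ) : ℝ × ℝ × ℝ :=
  (p.2.1 * p.2.2 / (p.1 + p.2.2), p.1 + p.2.2, p.1 * p.2.1 / (p.1 + p.2.2))

/- The outer coordinates of `T(a,b,c)` add up to `b`, which makes `T` undo itself. -/
theorem lusztigT_lusztigT {a b c : ℝ} (hb : b ≠ 0) (hac : a + c ≠ 0) :
    lusztigT (lusztigT (a, b, c)) = (a, b, c) := by
  have hsum : b * c / (a + c) + a * b / (a + c) = b := by
    field_simp
    ring
  simp only [lusztigT, hsum, Prod.mk.injEq]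
  refine ⟨?_, trivial, ?_⟩ <;> field_simp

theorem stmt_3 (a b c a' b' c' : ℝ) (ha : 0 < a) (hb : 0 < b) (hc : 0 < c)
    (ha' : 0 < a') (hb' : 0 < b') (hc' : 0 < c')
    (h : lusztigT (a, b, c) = lusztigT (a', b', c')) :
    a = a' ∧ b = b' ∧ c = c' := by
  have hT := congrArg lusztigT h
  rw [lusztigT_lusztigT hb.ne' (by positivity), lusztigT_lusztigT hb'.ne' (by positivity)] at hT
  simpa only [Prod.mk.injEq] using hT
end

section
/- Let q be a nonzero element of a field, and let α, β, γ be elements of a (noncommutative) division ring over that field satisfying αβ = q²βα, γα = q²αγ, βγ = γβ, with α + γ invertible. Define α' = (α+γ)⁻¹γβ, β' = α+γ, γ' = (α+γ)⁻¹αβ. Then α'β' = β'α', β'γ' = q²γ'β', and γ'α' = q²α'γ'. -/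
theorem stmt_7 {D : Type*} [DivisionRing D] (q α β γ : D)
    (hq : ∀ x : D, q * x = x * q) (hqne : q ≠ 0)
    (h1 : α * β = q ^ 2 * (β * α)) (h2 : γ * α = q ^ 2 * (α * γ))
    (h3 : β * γ = γ * β) (hsum : α + γ ≠ 0) (hβ : β ≠ 0)
    (α' β' γ' : D)
    (ha : α' = (α + γ)⁻¹ * (γ * β)) (hb : β' = α + γ)
    (hc : γ' = (α + γ)⁻¹ * (α * β)) :
    α' * β' = β' * α' ∧ β' * γ' = q ^ 2 * (γ' * β') ∧
      γ' * α' = q ^ 2 * (α' * γ') := by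
  have hq2 : ∀ x : D, q ^ 2 * x = x * q ^ 2 := by
    intro x
    rw [sq, mul_assoc, hq x, ← mul_assoc, hq x, mul_assoc]
  have hqc : ∀ x y : D, x * (q ^ 2 * y) = q ^ 2 * (x * y) := by
    intro x y
    rw [← mul_assoc, ← hq2, mul_assoc]
  have hq2ne : (q : D) ^ 2 ≠ 0 := pow_ne_zero 2 hqne
  have his : (α + γ) * (α + γ)⁻¹ = 1 := mul_inv_cancel₀ hsum
  have hsi : (α + γ)⁻¹ * (α + γ) = 1 := inv_mul_cancel₀ hsum
  -- commutation: γ * (β * α) = α * (γ * β)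
  have hc1 : γ * (β * α) = α * (γ * β) := by
    have hcalc : q ^ 2 * (γ * (β * α)) = q ^ 2 * (α * (γ * β)) := by
      calc q ^ 2 * (γ * (β * α)) = γ * (q ^ 2 * (β * α)) := by rw [hqc]
        _ = γ * (α * β) := by rw [← h1]
        _ = (γ * α) * β := by rw [mul_assoc]
        _ = (q ^ 2 * (α * γ)) * β := by rw [h2]
        _ = q ^ 2 * (α * (γ * β)) := by rw [mul_assoc, mul_assoc]
    exact mul_left_cancel₀ hq2ne hcalc
  -- key 1 : γβ(α+γ) = (α+γ)(γβ)
  have key1 : (γ * β) * (α + γ) = (α + γ) * (γ * β) := by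
    calc (γ * β) * (α + γ) = γ * (β * α) + γ * (β * γ) := by
          rw [mul_add, mul_assoc, mul_assoc]
      _ = α * (γ * β) + γ * (γ * β) := by rw [hc1, h3]
      _ = (α + γ) * (γ * β) := by rw [add_mul]
  -- key 2 : (α+γ)(αβ) = q^2 (αβ)(α+γ)
  have key2 : (α + γ) * (α * β) = q ^ 2 * ((α * β) * (α + γ)) := by
    calc (α + γ) * (α * β) = α * (α * β) + (γ * α) * β := by
          rw [add_mul, mul_assoc]
      _ = α * (q ^ 2 * (β * α)) + (q ^ 2 * (α * γ)) * β := by rw [h1, h2]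
      _ = q ^ 2 * (α * (β * α)) + q ^ 2 * (α * (γ * β)) := by
          simp only [hqc, mul_assoc]
      _ = q ^ 2 * ((α * β) * α + (α * β) * γ) := by
          rw [← mul_add]
          simp only [mul_assoc, h3]
      _ = q ^ 2 * ((α * β) * (α + γ)) := by rw [← mul_add]
  -- t = α + q^2 γ
  set t : D := α + q ^ 2 * γ with ht_def
  have htβ : t * β = q ^ 2 * (β * (α + γ)) := by
    calc t * β = α * β + q ^ 2 * (γ * β) := by rw [add_mul, mul_assoc]
      _ = q ^ 2 * (β * α) + q ^ 2 * (β * γ) := by rw [h1, h3]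
      _ = q ^ 2 * (β * (α + γ)) := by rw [← mul_add, ← mul_add]
  have ht : t ≠ 0 := by
    intro h0
    have : q ^ 2 * (β * (α + γ)) = 0 := by rw [← htβ, h0, zero_mul]
    exact (mul_ne_zero hq2ne (mul_ne_zero hβ hsum)) this
  have hti : t⁻¹ * t = 1 := inv_mul_cancel₀ ht
  have hits : t * t⁻¹ = 1 := mul_inv_cancel₀ ht
  have hβs : β * (α + γ)⁻¹ = q ^ 2 * (t⁻¹ * β) := by
    have h' : t * (β * (α + γ)⁻¹) = t * (q ^ 2 * (t⁻¹ * β)) := by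
      calc t * (β * (α + γ)⁻¹) = (t * β) * (α + γ)⁻¹ := by rw [mul_assoc]
        _ = q ^ 2 * (β * ((α + γ) * (α + γ)⁻¹)) := by
            rw [htβ]
            simp only [mul_assoc]
        _ = q ^ 2 * β := by rw [his, mul_one]
        _ = q ^ 2 * ((t * t⁻¹) * β) := by rw [hits, one_mul]
        _ = t * (q ^ 2 * (t⁻¹ * β)) := by rw [hqc, mul_assoc]
    exact mul_left_cancel₀ ht h'
  -- central commutation: α t⁻¹ γ = γ t⁻¹ α
  have hcomm : α * (t⁻¹ * γ) = γ * (t⁻¹ * α) := by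
    by_cases hα0 : α = 0
    · simp [hα0]
    by_cases hγ0 : γ = 0
    · simp [hγ0]
    have hkey : γ⁻¹ * (t * α⁻¹) = α⁻¹ * (t * γ⁻¹) := by
      rw [ht_def]
      simp only [add_mul, mul_add, mul_assoc, hqc, mul_inv_cancel₀ hα0,
        mul_inv_cancel₀ hγ0, inv_mul_cancel_left₀ hγ0, inv_mul_cancel_left₀ hα0,
        mul_one]
      rw [hq2]
    have hinv := congrArg (fun x : D => x⁻¹) hkey
    simp only [mul_inv_rev, inv_inv] at hinv
    simpa only [mul_assoc] using hinv
  subst ha hb hc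
  refine ⟨?_, ?_, ?_⟩
  · calc (α + γ)⁻¹ * (γ * β) * (α + γ)
        = (α + γ)⁻¹ * ((α + γ) * (γ * β)) := by rw [mul_assoc, key1]
      _ = γ * β := by rw [← mul_assoc, hsi, one_mul]
      _ = (α + γ) * ((α + γ)⁻¹ * (γ * β)) := by rw [← mul_assoc, his, one_mul]
  · calc (α + γ) * ((α + γ)⁻¹ * (α * β))
        = α * β := by rw [← mul_assoc, his, one_mul]
      _ = q ^ 2 * ((α + γ)⁻¹ * (α * β) * (α + γ)) := by
          rw [mul_assoc, hq2, mul_assoc, ← hq2, ← key2, ← mul_assoc, hsi, one_mul]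
  · -- γ' α' = q^2 α' γ'
    have lhs_eq : (α + γ)⁻¹ * (α * β) * ((α + γ)⁻¹ * (γ * β))
        = (α + γ)⁻¹ * (q ^ 2 * ((α * (t⁻¹ * γ)) * (β * β))) := by
      calc (α + γ)⁻¹ * (α * β) * ((α + γ)⁻¹ * (γ * β))
          = (α + γ)⁻¹ * (α * ((β * (α + γ)⁻¹) * (γ * β))) := by
            simp only [mul_assoc]
        _ = (α + γ)⁻¹ * (α * ((q ^ 2 * (t⁻¹ * β)) * (γ * β))) := by rw [hβs]
        _ = (α + γ)⁻¹ * (q ^ 2 * (α * (t⁻¹ * ((β * γ) * β)))) := by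
            simp only [mul_assoc, hqc]
        _ = (α + γ)⁻¹ * (q ^ 2 * (α * (t⁻¹ * ((γ * β) * β)))) := by rw [h3]
        _ = (α + γ)⁻¹ * (q ^ 2 * ((α * (t⁻¹ * γ)) * (β * β))) := by
            simp only [mul_assoc]
    have rhs_eq : q ^ 2 * ((α + γ)⁻¹ * (γ * β) * ((α + γ)⁻¹ * (α * β)))
        = (α + γ)⁻¹ * (q ^ 2 * ((γ * (t⁻¹ * α)) * (β * β))) := by
      calc q ^ 2 * ((α + γ)⁻¹ * (γ * β) * ((α + γ)⁻¹ * (α * β)))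
          = q ^ 2 * ((α + γ)⁻¹ * (γ * ((β * (α + γ)⁻¹) * (α * β)))) := by
            simp only [mul_assoc]
        _ = q ^ 2 * ((α + γ)⁻¹ * (γ * ((q ^ 2 * (t⁻¹ * β)) * (α * β)))) := by
            rw [hβs]
        _ = q ^ 2 * ((α + γ)⁻¹ * (γ * (t⁻¹ * ((q ^ 2 * (β * α)) * β)))) := by
            simp only [mul_assoc, hqc]
        _ = q ^ 2 * ((α + γ)⁻¹ * (γ * (t⁻¹ * ((α * β) * β)))) := by rw [← h1]
        _ = (α + γ)⁻¹ * (q ^ 2 * ((γ * (t⁻¹ * α)) * (β * β))) := by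
            simp only [mul_assoc, hqc]
    rw [lhs_eq, rhs_eq, hcomm]
end

section
/- Let α, β, γ be elements of a division ring with central invertible q, satisfying αβ = q²βα, γα = q²αγ, βγ = γβ, with α+γ and β invertible. Define α' = (α+γ)⁻¹γβ, β' = α+γ, γ' = (α+γ)⁻¹αβ. Then the transformation (α,β,γ) ↦ (α',β',γ') is an involution: defining α'' = (α'+γ')⁻¹γ'β', β'' = α'+γ', γ'' = (α'+γ')⁻¹α'β', one has α'' = α, β'' = β, γ'' = γ. -/
theorem stmt_9 {D : Type*} [DivisionRing D] (q α β γ : D)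
    (hq : ∀ x : D, q * x = x * q) (hqne : q ≠ 0)
    (h1 : α * β = q ^ 2 * (β * α)) (h2 : γ * α = q ^ 2 * (α * γ))
    (h3 : β * γ = γ * β) (hsum : α + γ ≠ 0) (hβ : β ≠ 0)
    (α' β' γ' : D)
    (ha : α' = (α + γ)⁻¹ * (γ * β)) (hb : β' = α + γ)
    (hc : γ' = (α + γ)⁻¹ * (α * β)) (hsum' : α' + γ' ≠ 0) :
    (α' + γ')⁻¹ * (γ' * β') = α ∧ α' + γ' = β ∧
      (α' + γ')⁻¹ * (α' * β') = γ := by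
  have hq2 : ∀ x : D, q ^ 2 * x = x * q ^ 2 := by
    intro x
    rw [pow_two, mul_assoc, hq, ← mul_assoc, hq, mul_assoc]
  have key : α * β * γ = γ * β * α := by
    rw [h1, ← h3, mul_assoc β, h2]
    rw [hq2 (β * α), hq2 (α * γ), mul_assoc (β * α), hq2 γ]; simp [mul_assoc]
  have hsumβ : α' + γ' = β := by
    rw [ha, hc, ← mul_add, ← add_mul, add_comm γ α, inv_mul_cancel_left₀ hsum]
  refine ⟨?_, hsumβ, ?_⟩
  · rw [hsumβ, hc, hb]
    have h4 : α * β * (α + γ) = (α + γ) * (β * α) := by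
      rw [mul_add, add_mul, key]; simp [mul_assoc]
    rw [mul_assoc (α + γ)⁻¹, h4, inv_mul_cancel_left₀ hsum, inv_mul_cancel_left₀ hβ]
  · rw [hsumβ, ha, hb]
    have h4 : γ * β * (α + γ) = (α + γ) * (β * γ) := by
      rw [mul_add, add_mul, ← key]; simp [mul_assoc]
    rw [mul_assoc (α + γ)⁻¹, h4, inv_mul_cancel_left₀ hsum, inv_mul_cancel_left₀ hβ]
end
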